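/- Let M = (S, Act, δ) be an MDP, μ_0 ∈ D(S) an initial distribution, and π any (path) strategy with induced distribution stream (μ_n^π)_{n≥0}. Then there exists a sequence (σ_n)_{n≥0} of one-step strategies such that μ_{n+1}^π = step(σ_n, μ_n^π) for every n ≥ 0; in particular, the Markov strategy given by (σ_n) induces exactly the same stream of state distributions as π. -/
import Mathlib


open Finset

/-- A probability distribution on a finite type, represented as a function. -/
def IsDist {X : Type*} [Fintype X] (μ : X → ℝ) : Prop :=
  (∀ x, 0 ≤ μ x) ∧ ∑ x, μ x = 1

/-- A Markov decision process with finite state space `S` and finite action space `Act`. -/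
structure MDP (S Act : Type*) [Fintype S] [Fintype Act] where
  avail : S → Finset Act
  avail_nonempty : ∀ s, (avail s).Nonempty
  trans : S → Act → S → ℝ
  trans_dist : ∀ s, ∀ a ∈ avail s, IsDist (trans s a)

variable {S Act : Type*} [Fintype S] [Fintype Act] [DecidableEq S]

/-- `σ` is a one-step (memoryless) strategy: at each state a probability
distribution over actions, supported on the available actions. -/
def IsOneStep (M : MDP S Act) (σ : S → Act → ℝ) : Prop :=
  ∀ s, (∀ a, 0 ≤ σ s a) ∧ (∀ a, a ∉ M.avail s → σ s a = 0) ∧ ∑ a, σ s a = 1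

/-- One-step application of a one-step strategy to a distribution over states:
`step(σ,μ)(s') = Σ_s Σ_a μ(s)·σ(s)(a)·δ(s,a)(s')`. -/
def mdpStep (M : MDP S Act) (σ : S → Act → ℝ) (μ : S → ℝ) : S → ℝ :=
  fun s' => ∑ s, ∑ a, μ s * σ s a * M.trans s a s'

/-- A finite path `s₀ a₀ s₁ a₁ … sₙ`: the first state together with the list
`[(a₀,s₁),…,(a_{n-1},sₙ)]`. -/
abbrev FinPath (S Act : Type*) := S × List (Act × S)

/-- The last state of a finite path. -/
def lastState {S Act : Type*} (ρ : FinPath S Act) : S :=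
  ρ.2.foldl (fun _ p => p.2) ρ.1

/-- `π` is a path strategy: it assigns to each finite path a probability
distribution over actions, supported on the actions available at the last state. -/
def IsPathStrategy (M : MDP S Act) (π : FinPath S Act → Act → ℝ) : Prop :=
  ∀ ρ, (∀ a, 0 ≤ π ρ a) ∧ (∀ a, a ∉ M.avail (lastState ρ) → π ρ a = 0) ∧ ∑ a, π ρ a = 1

/-- The joint distribution `ν_n` over paths of length `n` induced by a path strategy `π`
and initial distribution `μ0`: `ν_0(s) = μ0(s)` and
`ν_{n+1}(ρ a s') = ν_n(ρ)·π(ρ)(a)·δ(last(ρ),a)(s')` (and `0` on paths of the wrong length). -/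
def pathDist (M : MDP S Act) (π : FinPath S Act → Act → ℝ) (μ0 : S → ℝ) :
    ℕ → FinPath S Act → ℝ
  | 0 => fun ρ => match ρ.2 with
      | [] => μ0 ρ.1
      | _ :: _ => 0
  | n + 1 => fun ρ =>
      match ρ.2.getLast? with
      | none => 0
      | some (a, s') =>
          pathDist M π μ0 n (ρ.1, ρ.2.dropLast) * π (ρ.1, ρ.2.dropLast) a *
            M.trans (lastState (ρ.1, ρ.2.dropLast)) a s'

/-- The induced stream of state distributions: `μ_n^π(s)` is the total mass of
paths of length `n` ending in `s`. -/
def distStream (M : MDP S Act) (π : FinPath S Act → Act → ℝ) (μ0 : S → ℝ) (n : ℕ) : S → ℝ :=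
  fun s => ∑ s0 : S, ∑ f : Fin n → Act × S,
    if lastState (s0, List.ofFn f) = s then pathDist M π μ0 n (s0, List.ofFn f) else 0

/-- The stream of distributions induced by a distribution strategy `τ`:
`μ_0 = μ0`, `μ_{i+1} = step(τ(μ_i), μ_i)`. -/
def tauStream (M : MDP S Act) (τ : (S → ℝ) → S → Act → ℝ) (μ0 : S → ℝ) : ℕ → S → ℝ
  | 0 => μ0
  | n + 1 => mdpStep M (τ (tauStream M τ μ0 n)) (tauStream M τ μ0 n)


/-- The stream of distributions induced by a Markov strategy, i.e.\ a sequence of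
one-step strategies `σ_n`: `μ_0 = μ0`, `μ_{n+1} = step(σ_n, μ_n)`. -/
def markovStream (M : MDP S Act) (σ : ℕ → S → Act → ℝ) (μ0 : S → ℝ) : ℕ → S → ℝ
  | 0 => μ0
  | n + 1 => mdpStep M (σ n) (markovStream M σ μ0 n)

section AuxLemmas

variable (M : MDP S Act) (π : FinPath S Act → Act → ℝ) (μ0 : S → ℝ)

lemma ofFn_snoc {X : Type*} {n : ℕ} (g : Fin n → X) (x : X) :
    List.ofFn (Fin.snoc g x) = (List.ofFn g).concat x := by
  rw [List.ofFn_succ']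
  simp

lemma lastState_concat (s0 : S) (l : List (Act × S)) (p : Act × S) :
    lastState (s0, l.concat p) = p.2 := by
  simp [lastState, List.concat_eq_append]

lemma pathDist_nonneg (hμ0 : IsDist μ0) (hπ : IsPathStrategy M π) :
    ∀ n ρ, 0 ≤ pathDist M π μ0 n ρ := by
  intro n
  induction n with
  | zero =>
    rintro ⟨s0, l⟩
    cases l with
    | nil => exact hμ0.1 s0
    | cons p l => simp [pathDist]
  | succ n ih =>
    rintro ⟨s0, l⟩
    rcases h : l.getLast? with _ | ⟨a, t⟩
    · simp [pathDist, h]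
    · simp only [pathDist, h]
      by_cases ha : a ∈ M.avail (lastState (s0, l.dropLast))
      · exact mul_nonneg (mul_nonneg (ih _) ((hπ _).1 a)) ((M.trans_dist _ a ha).1 t)
      · rw [(hπ _).2.1 a ha]
        simp

lemma pathDist_concat (n : ℕ) (s0 : S) (l : List (Act × S)) (a : Act) (t : S) :
    pathDist M π μ0 (n + 1) (s0, l.concat (a, t)) =
      pathDist M π μ0 n (s0, l) * π (s0, l) a * M.trans (lastState (s0, l)) a t := by
  simp [pathDist, List.getLast?_concat, List.dropLast_concat]

/-- The joint mass at step `n` of being at state `s` and choosing action `a`. -/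
noncomputable def pmass (n : ℕ) (s : S) (a : Act) : ℝ :=
  ∑ s0 : S, ∑ f : Fin n → Act × S,
    if lastState (s0, List.ofFn f) = s then
      pathDist M π μ0 n (s0, List.ofFn f) * π (s0, List.ofFn f) a else 0

lemma pmass_nonneg (hμ0 : IsDist μ0) (hπ : IsPathStrategy M π) (n : ℕ) (s : S) (a : Act) :
    0 ≤ pmass M π μ0 n s a := by
  refine Finset.sum_nonneg fun s0 _ => Finset.sum_nonneg fun f _ => ?_
  split_ifs
  · exact mul_nonneg (pathDist_nonneg M π μ0 hμ0 hπ n _) ((hπ _).1 a)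
  · exact le_refl 0

lemma pmass_not_avail (hπ : IsPathStrategy M π) (n : ℕ) (s : S) (a : Act)
    (ha : a ∉ M.avail s) : pmass M π μ0 n s a = 0 := by
  refine Finset.sum_eq_zero fun s0 _ => Finset.sum_eq_zero fun f _ => ?_
  split_ifs with h
  · rw [(hπ _).2.1 a (by rw [h]; exact ha), mul_zero]
  · rfl

lemma sum_pmass (hπ : IsPathStrategy M π) (n : ℕ) (s : S) :
    ∑ a, pmass M π μ0 n s a = distStream M π μ0 n s := by
  unfold pmass distStream
  rw [Finset.sum_comm]
  refine Finset.sum_congr rfl fun s0 _ => ?_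
  rw [Finset.sum_comm]
  refine Finset.sum_congr rfl fun f _ => ?_
  by_cases h : lastState (s0, List.ofFn f) = s
  · simp only [if_pos h, ← Finset.mul_sum, (hπ (s0, List.ofFn f)).2.2, mul_one]
  · simp [if_neg h]

/-- The equivalence `snoc` between `(Fin n → X) × X` and `Fin (n+1) → X`. -/
def snocEquiv (X : Type*) (n : ℕ) : ((Fin n → X) × X) ≃ (Fin (n + 1) → X) where
  toFun p := Fin.snoc p.1 p.2
  invFun f := (Fin.init f, f (Fin.last n))
  left_inv p := by simp
  right_inv f := by simp

lemma distStream_succ (n : ℕ) (s' : S) :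
    distStream M π μ0 (n + 1) s' = ∑ s : S, ∑ a : Act,
      pmass M π μ0 n s a * M.trans s a s' := by
  have LHS : distStream M π μ0 (n + 1) s' =
      ∑ s0 : S, ∑ g : Fin n → Act × S, ∑ a : Act,
        pathDist M π μ0 n (s0, List.ofFn g) * π (s0, List.ofFn g) a *
          M.trans (lastState (s0, List.ofFn g)) a s' := by
    unfold distStream
    refine Finset.sum_congr rfl fun s0 _ => ?_
    rw [← Equiv.sum_comp (snocEquiv (Act × S) n)]
    rw [Fintype.sum_prod_type]
    refine Finset.sum_congr rfl fun g _ => ?_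
    rw [Fintype.sum_prod_type]
    refine Finset.sum_congr rfl fun a _ => ?_
    have : ∀ t : S, (if lastState (s0, List.ofFn (snocEquiv (Act × S) n (g, (a, t)))) = s'
        then pathDist M π μ0 (n + 1) (s0, List.ofFn (snocEquiv (Act × S) n (g, (a, t)))) else 0)
        = if t = s' then pathDist M π μ0 n (s0, List.ofFn g) * π (s0, List.ofFn g) a *
            M.trans (lastState (s0, List.ofFn g)) a s' else 0 := by
      intro t
      have h1 : List.ofFn (snocEquiv (Act × S) n (g, (a, t))) = (List.ofFn g).concat (a, t) :=
        ofFn_snoc g (a, t)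
      rw [h1, lastState_concat]
      by_cases ht : t = s'
      · rw [if_pos ht, if_pos ht, pathDist_concat, ht]
      · rw [if_neg ht, if_neg ht]
    simp only [this]
    simp
  rw [LHS]
  have RHS : ∑ s : S, ∑ a : Act, pmass M π μ0 n s a * M.trans s a s' =
      ∑ s0 : S, ∑ g : Fin n → Act × S, ∑ a : Act, ∑ s : S,
        (if lastState (s0, List.ofFn g) = s then
          pathDist M π μ0 n (s0, List.ofFn g) * π (s0, List.ofFn g) a *
            M.trans s a s' else 0) := by
    unfold pmass
    simp only [Finset.sum_mul, ite_mul, zero_mul]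
    calc (∑ s : S, ∑ a : Act, ∑ s0 : S, ∑ g : Fin n → Act × S,
          (if lastState (s0, List.ofFn g) = s then
            pathDist M π μ0 n (s0, List.ofFn g) * π (s0, List.ofFn g) a *
              M.trans s a s' else 0))
        = ∑ s : S, ∑ s0 : S, ∑ a : Act, ∑ g : Fin n → Act × S, _ :=
          Finset.sum_congr rfl fun s _ => Finset.sum_comm
      _ = ∑ s0 : S, ∑ s : S, ∑ a : Act, ∑ g : Fin n → Act × S, _ := Finset.sum_comm
      _ = ∑ s0 : S, ∑ s : S, ∑ g : Fin n → Act × S, ∑ a : Act, _ :=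
          Finset.sum_congr rfl fun s0 _ => Finset.sum_congr rfl fun s _ => Finset.sum_comm
      _ = ∑ s0 : S, ∑ g : Fin n → Act × S, ∑ s : S, ∑ a : Act, _ :=
          Finset.sum_congr rfl fun s0 _ => Finset.sum_comm
      _ = ∑ s0 : S, ∑ g : Fin n → Act × S, ∑ a : Act, ∑ s : S, _ :=
          Finset.sum_congr rfl fun s0 _ => Finset.sum_congr rfl fun g _ => Finset.sum_comm
  rw [RHS]
  refine Finset.sum_congr rfl fun s0 _ => Finset.sum_congr rfl fun g _ =>
    Finset.sum_congr rfl fun a _ => ?_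
  rw [Finset.sum_ite_eq]
  simp

lemma distStream_zero (s : S) : distStream M π μ0 0 s = μ0 s := by
  unfold distStream
  simp [List.ofFn_zero, lastState, pathDist, Finset.sum_ite_eq]

end AuxLemmas

/-- For any path strategy `π` there is a sequence of one-step strategies
`σ_n` with `μ_{n+1}^π = step(σ_n, μ_n^π)` for all `n`; in particular the Markov strategy
`(σ_n)` induces exactly the same stream of state distributions as `π`. -/
theorem markov_strategies_suffice (M : MDP S Act) (μ0 : S → ℝ) (hμ0 : IsDist μ0)
    (π : FinPath S Act → Act → ℝ) (hπ : IsPathStrategy M π) :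
    ∃ σ : ℕ → S → Act → ℝ, (∀ n, IsOneStep M (σ n)) ∧
      (∀ n, distStream M π μ0 (n + 1) = mdpStep M (σ n) (distStream M π μ0 n)) ∧
      (∀ n, markovStream M σ μ0 n = distStream M π μ0 n) := by
  classical
  have hsum : ∀ n s, ∑ a, pmass M π μ0 n s a = distStream M π μ0 n s := sum_pmass M π μ0 hπ
  have hnn : ∀ n s a, 0 ≤ pmass M π μ0 n s a := pmass_nonneg M π μ0 hμ0 hπ
  have hzero : ∀ n s, distStream M π μ0 n s = 0 → ∀ a, pmass M π μ0 n s a = 0 := by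
    intro n s h a
    exact (Finset.sum_eq_zero_iff_of_nonneg (fun a _ => hnn n s a)).1
      ((hsum n s).trans h) a (Finset.mem_univ a)
  have key : ∀ n, distStream M π μ0 (n + 1) = mdpStep M
      (fun s a => if distStream M π μ0 n s = 0 then
        (if a = (M.avail_nonempty s).choose then 1 else 0)
        else pmass M π μ0 n s a / distStream M π μ0 n s) (distStream M π μ0 n) := by
    intro n
    funext s'
    rw [distStream_succ]
    unfold mdpStep
    dsimp only
    refine Finset.sum_congr rfl fun s _ => Finset.sum_congr rfl fun a _ => ?_
    by_cases h : distStream M π μ0 n s = 0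
    · rw [hzero n s h a, zero_mul, h, zero_mul, zero_mul]
    · rw [if_neg h, mul_comm (distStream M π μ0 n s), div_mul_cancel₀ _ h]
  refine ⟨fun n s a => if distStream M π μ0 n s = 0 then
      (if a = (M.avail_nonempty s).choose then 1 else 0)
      else pmass M π μ0 n s a / distStream M π μ0 n s, ?_, fun n => key n, ?_⟩
  · intro n s
    refine ⟨fun a => ?_, fun a ha => ?_, ?_⟩
    all_goals dsimp only
    · by_cases h : distStream M π μ0 n s = 0
      · simp only [if_pos h]; split_ifs <;> norm_num
      · rw [if_neg h]
        refine div_nonneg (hnn n s a) ?_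
        rw [← hsum n s]
        exact Finset.sum_nonneg fun a _ => hnn n s a
    · by_cases h : distStream M π μ0 n s = 0
      · rw [if_pos h, if_neg]
        intro hc
        exact ha (hc ▸ (M.avail_nonempty s).choose_spec)
      · rw [if_neg h, pmass_not_avail M π μ0 hπ n s a ha, zero_div]
    · by_cases h : distStream M π μ0 n s = 0
      · simp only [if_pos h]
        rw [Finset.sum_ite_eq' Finset.univ ((M.avail_nonempty s).choose) (fun _ => (1 : ℝ))]
        simp
      · simp only [if_neg h]
        rw [← Finset.sum_div, hsum n s, div_self h]
  · intro n
    induction n with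
    | zero =>
      funext s
      show μ0 s = distStream M π μ0 0 s
      rw [distStream_zero]
    | succ n ih =>
      show mdpStep M _ (markovStream M _ μ0 n) = distStream M π μ0 (n + 1)
      rw [ih, key n]
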